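/- Let φ₀ be a PDL⁻ formula and e a PDL⁻ term. For every nonempty set X of atoms of φ₀, there exists an atom α ∈ X such that the formula α̂ ∧ [e⁺](⋁_{β ∈ At(φ₀)∖X} β̂) is consistent (where the disjunction over the empty set is F). -/

import Mathlib

/-- A generalized structure over term variables `A` and formula variables `P`,
with universe `W`. -/
structure GStruct (A P W : Type) where
  U : W → W → Prop
  rel : A → W → W → Prop
  rel_sub : ∀ a x y, rel a x y → U x y
  val : P → W → Prop

/-- The universal relation is a finite linear order (on a nonempty finite universe). -/
def FinLin {A P W : Type} (S : GStruct A P W) : Prop :=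
  Nonempty W ∧ Finite W ∧ (∀ x, S.U x x) ∧
    (∀ x y z, S.U x y → S.U y z → S.U x z) ∧
    (∀ x y, S.U x y → S.U y x → x = y) ∧ (∀ x y, S.U x y ∨ S.U y x)

/-- The universal relation is a finite strict linear order
(on a nonempty finite universe). -/
def SFinLin {A P W : Type} (S : GStruct A P W) : Prop :=
  Nonempty W ∧ Finite W ∧ (∀ x, ¬ S.U x x) ∧
    (∀ x y z, S.U x y → S.U y z → S.U x z) ∧
    (∀ x y, x ≠ y → S.U x y ∨ S.U y x)
mutual
  /-- Formulas of identity-free PDL (PDL⁻). -/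
  inductive MFml (A P : Type) : Type where
    | pv : P → MFml A P
    | imp : MFml A P → MFml A P → MFml A P
    | fls : MFml A P
    | box : MTrm A P → MFml A P → MFml A P
  /-- Terms of identity-free PDL (PDL⁻). -/
  inductive MTrm (A P : Type) : Type where
    | tv : A → MTrm A P
    | comp : MTrm A P → MTrm A P → MTrm A P
    | union : MTrm A P → MTrm A P → MTrm A P
    | plus : MTrm A P → MTrm A P
    | testL : MFml A P → MTrm A P → MTrm A P
    | testR : MTrm A P → MFml A P → MTrm A P
end

namespace MFml
/-- ¬φ := φ → F -/
def neg {A P : Type} (φ : MFml A P) : MFml A P := .imp φ .fls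
/-- T := ¬F -/
def tru {A P : Type} : MFml A P := neg .fls
/-- φ ∨ ψ := ¬φ → ψ -/
def or {A P : Type} (φ ψ : MFml A P) : MFml A P := .imp (neg φ) ψ
/-- φ ∧ ψ := ¬(¬φ ∨ ¬ψ) -/
def and {A P : Type} (φ ψ : MFml A P) : MFml A P := neg (or (neg φ) (neg ψ))
/-- φ ↔ ψ := (φ → ψ) ∧ (ψ → φ) -/
def iff {A P : Type} (φ ψ : MFml A P) : MFml A P := and (.imp φ ψ) (.imp ψ φ)
/-- ⟨e⟩φ := ¬[e]¬φ -/
def dia {A P : Type} (e : MTrm A P) (φ : MFml A P) : MFml A P := neg (.box e (neg φ))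
end MFml

mutual
  /-- Semantics of PDL⁻ formulas on a generalized structure. -/
  def msemF {A P W : Type} (S : GStruct A P W) : MFml A P → W → Prop
    | .pv p, x => S.val p x
    | .imp φ ψ, x => msemF S φ x → msemF S ψ x
    | .fls, _ => False
    | .box e φ, x => ∀ y, msemT S e x y → msemF S φ y
  /-- Semantics of PDL⁻ terms on a generalized structure. -/
  def msemT {A P W : Type} (S : GStruct A P W) : MTrm A P → W → W → Prop
    | .tv a, x, y => S.rel a x y
    | .comp e f, x, z => ∃ y, msemT S e x y ∧ msemT S f y z
    | .union e f, x, y => msemT S e x y ∨ msemT S f x y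
    | .plus e, x, y => Relation.TransGen (fun u v => msemT S e u v) x y
    | .testL ψ e, x, y => msemF S ψ x ∧ msemT S e x y
    | .testR e ψ, x, y => msemT S e x y ∧ msemF S ψ y
end
/-- Propositional formulas over variables `V`. -/
inductive PropF (V : Type) : Type where
  | pv : V → PropF V
  | imp : PropF V → PropF V → PropF V
  | fls : PropF V

/-- Evaluation of a propositional formula under a valuation. -/
def PropF.eval {V : Type} (v : V → Prop) : PropF V → Prop
  | .pv p => v p
  | .imp a b => PropF.eval v a → PropF.eval v b
  | .fls => False

/-- Substitution instance of a propositional formula, substituting PDL⁻ formulas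
for the propositional variables. -/
def PropF.inst {V A P : Type} (σ : V → MFml A P) : PropF V → MFml A P
  | .pv p => σ p
  | .imp a b => .imp (PropF.inst σ a) (PropF.inst σ b)
  | .fls => .fls

/-- The Hilbert system `H⁻` for PDL⁻ on finite strict linear orders. -/
inductive MProof {A P : Type} : MFml A P → Prop where
  /-- modus ponens -/
  | mp {φ ψ : MFml A P} : MProof φ → MProof (.imp φ ψ) → MProof ψ
  /-- necessitation -/
  | nec {φ : MFml A P} (e : MTrm A P) : MProof φ → MProof (.box e φ)
  /-- (Prop): all substitution-instances of valid propositional formulas -/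
  | prop {V : Type} (χ : PropF V) (hval : ∀ v, PropF.eval v χ) (σ : V → MFml A P) :
      MProof (PropF.inst σ χ)
  /-- (;) -/
  | compAx (e f : MTrm A P) (φ : MFml A P) :
      MProof (MFml.iff (.box (.comp e f) φ) (.box e (.box f φ)))
  /-- (+) -/
  | unionAx (e f : MTrm A P) (φ : MFml A P) :
      MProof (MFml.iff (.box (.union e f) φ) (MFml.and (.box e φ) (.box f φ)))
  /-- (⁺) -/
  | plusAx (e : MTrm A P) (φ : MFml A P) :
      MProof (MFml.iff (.box (.plus e) φ) (MFml.and (.box e φ) (.box e (.box (.plus e) φ))))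
  /-- (⁺-Ind) -/
  | plusInd (e : MTrm A P) (φ : MFml A P) :
      MProof (.imp (MFml.and (.box e φ) (.box (.plus e) (.imp φ (.box e φ)))) (.box (.plus e) φ))
  /-- (?-L) -/
  | testLAx (ψ : MFml A P) (e : MTrm A P) (φ : MFml A P) :
      MProof (MFml.iff (.box (.testL ψ e) φ) (.imp ψ (.box e φ)))
  /-- (?-R) -/
  | testRAx (e : MTrm A P) (ψ φ : MFml A P) :
      MProof (MFml.iff (.box (.testR e ψ) φ) (.box e (.imp ψ φ)))
  /-- (K) -/
  | kAx (e : MTrm A P) (φ ψ : MFml A P) :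
      MProof (.imp (.box e (.imp φ ψ)) (.imp (.box e φ) (.box e ψ)))
  /-- (Löb-⁺) -/
  | loeb (e : MTrm A P) (φ : MFml A P) :
      MProof (.imp (.box (.plus e) (.imp (.box (.plus e) φ) φ)) (.box (.plus e) φ))
/-- A PDL⁻ formula is consistent if its negation is not derivable in `H⁻`. -/
def Consistent {A P : Type} (φ : MFml A P) : Prop := ¬ MProof (MFml.neg φ)
/-- The Fischer–Ladner-style closure `cl(φ₀)` of a PDL⁻ formula, as the smallest
set of formulas closed under the given rules. -/
inductive Cl {A P : Type} (φ₀ : MFml A P) : MFml A P → Prop where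
  | base : Cl φ₀ φ₀
  | impL {ψ χ : MFml A P} : Cl φ₀ (.imp ψ χ) → Cl φ₀ ψ
  | impR {ψ χ : MFml A P} : Cl φ₀ (.imp ψ χ) → Cl φ₀ χ
  | boxBody {e : MTrm A P} {ψ : MFml A P} : Cl φ₀ (.box e ψ) → Cl φ₀ ψ
  | unionL {e f : MTrm A P} {ψ : MFml A P} :
      Cl φ₀ (.box (.union e f) ψ) → Cl φ₀ (.box e ψ)
  | unionR {e f : MTrm A P} {ψ : MFml A P} :
      Cl φ₀ (.box (.union e f) ψ) → Cl φ₀ (.box f ψ)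
  | plus {e : MTrm A P} {ψ : MFml A P} :
      Cl φ₀ (.box (.plus e) ψ) → Cl φ₀ (.box e (.box (.plus e) ψ))
  | comp {e f : MTrm A P} {ψ : MFml A P} :
      Cl φ₀ (.box (.comp e f) ψ) → Cl φ₀ (.box e (.box f ψ))
  | testL {χ : MFml A P} {e : MTrm A P} {ψ : MFml A P} :
      Cl φ₀ (.box (.testL χ e) ψ) → Cl φ₀ (.imp χ (.box e ψ))
  | testR {e : MTrm A P} {χ ψ : MFml A P} :
      Cl φ₀ (.box (.testR e χ) ψ) → Cl φ₀ (.box e (.imp χ ψ))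

/-- Conjunction of a list of formulas. -/
def conjList {A P : Type} : List (MFml A P) → MFml A P
  | [] => MFml.tru
  | φ :: l => MFml.and φ (conjList l)

/-- Disjunction of a list of formulas (the empty disjunction is `F`). -/
def disjList {A P : Type} : List (MFml A P) → MFml A P
  | [] => MFml.fls
  | φ :: l => MFml.or φ (disjList l)

/-- `α̂`: the conjunction of the finite set of formulas `α`. -/
noncomputable def hat {A P : Type} (α : Finset (MFml A P)) : MFml A P := conjList α.toList

/-- An atom of `φ₀`: a consistent set containing, for each `ψ ∈ cl(φ₀)`,
exactly one of `ψ` or `¬ψ`, and nothing else. -/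
def IsAtomOf {A P : Type} (φ₀ : MFml A P) (α : Finset (MFml A P)) : Prop :=
  Consistent (hat α) ∧
    (∀ ψ, Cl φ₀ ψ → ((ψ ∈ α ∧ MFml.neg ψ ∉ α) ∨ (MFml.neg ψ ∈ α ∧ ψ ∉ α))) ∧
    (∀ χ ∈ α, ∃ ψ, Cl φ₀ ψ ∧ (χ = ψ ∨ χ = MFml.neg ψ))

/-!
Suppose every `α ∈ X` makes `α̂ ∧ [e⁺]D` inconsistent, where `D` is the disjunction of the
atoms outside `X`. The atoms exhaust all propositional possibilities, so `⊢ ⋁_β β̂`; an atom in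
`X` refutes `[e⁺]D` and an atom outside `X` is a disjunct of `D`, hence `⊢ [e⁺]D → D`.
Necessitation and Löb give `⊢ [e⁺]D`, so `⊢ ¬α̂` for any `α ∈ X`, against its consistency.
-/

namespace MFml

variable {A P : Type}

def toPropF : MFml A P → PropF (MFml A P)
  | .pv p => .pv (.pv p)
  | .imp a b => .imp a.toPropF b.toPropF
  | .fls => .fls
  | .box e φ => .pv (.box e φ)

def propEval (v : MFml A P → Prop) (φ : MFml A P) : Prop := φ.toPropF.eval v

theorem inst_id_toPropF : ∀ φ : MFml A P, φ.toPropF.inst id = φ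
  | .pv _ | .fls | .box _ _ => rfl
  | .imp a b => congrArg₂ MFml.imp (inst_id_toPropF a) (inst_id_toPropF b)

theorem neg_injective : Function.Injective (neg : MFml A P → MFml A P) :=
  fun _ _ h => (MFml.imp.inj h).1

@[simp]
theorem propEval_imp (v : MFml A P → Prop) (a b : MFml A P) :
    (MFml.imp a b).propEval v ↔ (a.propEval v → b.propEval v) := Iff.rfl

@[simp]
theorem propEval_fls (v : MFml A P → Prop) : (MFml.fls : MFml A P).propEval v ↔ False :=
  Iff.rfl

@[simp]
theorem propEval_neg (v : MFml A P → Prop) (a : MFml A P) :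
    a.neg.propEval v ↔ ¬ a.propEval v := Iff.rfl

@[simp]
theorem propEval_and (v : MFml A P → Prop) (a b : MFml A P) :
    (a.and b).propEval v ↔ a.propEval v ∧ b.propEval v := by
  simp only [MFml.and, MFml.or, propEval_neg, propEval_imp]
  tauto

@[simp]
theorem propEval_or (v : MFml A P → Prop) (a b : MFml A P) :
    (a.or b).propEval v ↔ a.propEval v ∨ b.propEval v := by
  simp only [MFml.or, propEval_neg, propEval_imp]
  tauto

end MFml

section Propositional

variable {A P : Type}

@[simp]
theorem propEval_conjList (v : MFml A P → Prop) :
    ∀ l : List (MFml A P), (conjList l).propEval v ↔ ∀ φ ∈ l, φ.propEval v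
  | [] => by simp [conjList, MFml.tru]
  | φ :: l => by simp [conjList, propEval_conjList v l]

@[simp]
theorem propEval_disjList (v : MFml A P → Prop) :
    ∀ l : List (MFml A P), (disjList l).propEval v ↔ ∃ φ ∈ l, φ.propEval v
  | [] => by simp [disjList]
  | φ :: l => by simp [disjList, propEval_disjList v l]

@[simp]
theorem propEval_hat (v : MFml A P → Prop) (α : Finset (MFml A P)) :
    (hat α).propEval v ↔ ∀ φ ∈ α, φ.propEval v := by
  simp [hat]

namespace MProof

theorem of_taut {φ : MFml A P} (h : ∀ v, φ.propEval v) : MProof φ := by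
  simpa only [MFml.inst_id_toPropF] using MProof.prop φ.toPropF h id

theorem of_entails :
    ∀ {Γ : List (MFml A P)} {ψ : MFml A P}, (∀ φ ∈ Γ, MProof φ) →
      (∀ v, (∀ φ ∈ Γ, φ.propEval v) → ψ.propEval v) → MProof ψ
  | [], _, _, h => of_taut fun v => h v (by simp)
  | φ :: Γ, _, hΓ, h =>
    (hΓ φ List.mem_cons_self).mp <|
      of_entails (fun χ hχ => hΓ χ (List.mem_cons_of_mem φ hχ))
        fun v hΓv hφ => h v (List.forall_mem_cons.2 ⟨hφ, hΓv⟩)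

theorem mono {φ ψ : MFml A P} (hφ : MProof φ) (h : ∀ v, φ.propEval v → ψ.propEval v) :
    MProof ψ :=
  of_entails (Γ := [φ]) (by simpa using hφ) fun v hv => h v (by simpa using hv)

theorem imp_disjList_of_mem {φ : MFml A P} {l : List (MFml A P)} (h : φ ∈ l) :
    MProof (.imp φ (disjList l)) :=
  of_taut fun v hφ => (propEval_disjList v l).2 ⟨φ, h, hφ⟩

theorem of_disjList {l : List (MFml A P)} {ψ : MFml A P} (hl : MProof (disjList l))
    (h : ∀ φ ∈ l, MProof (.imp φ ψ)) : MProof ψ := by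
  refine of_entails (Γ := disjList l :: l.map (MFml.imp · ψ)) (by simpa using ⟨hl, h⟩) ?_
  intro v hv
  obtain ⟨hdisj, himp⟩ := List.forall_mem_cons.1 hv
  obtain ⟨φ, hφ, hφv⟩ := (propEval_disjList v l).1 hdisj
  exact himp _ (List.mem_map_of_mem hφ) hφv

theorem neg_of_not_consistent_and {a b : MFml A P} (h : ¬Consistent (a.and b))
    (hb : MProof b) : MProof a.neg :=
  of_entails (Γ := [(a.and b).neg, b]) (by simpa using ⟨not_not.1 h, hb⟩)
    fun v hv => by
      simp only [List.forall_mem_cons, MFml.propEval_neg, MFml.propEval_and] at hv ⊢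
      tauto

end MProof

end Propositional

section Atoms

variable {A P : Type}

theorem IsAtomOf.finite_setOf_cl {φ₀ : MFml A P} {α : Finset (MFml A P)}
    (hα : IsAtomOf φ₀ α) :
    {ψ | Cl φ₀ ψ}.Finite :=
  (α.finite_toSet.union (α.finite_toSet.preimage MFml.neg_injective.injOn)).subset
    fun ψ hψ => (hα.2.1 ψ hψ).imp And.left And.left

def signedSet [DecidableEq (MFml A P)] (C s : Finset (MFml A P)) : Finset (MFml A P) :=
  C.image fun ψ => if ψ ∈ s then ψ else ψ.neg

theorem not_consistent_hat_of_mem_of_neg_mem {α : Finset (MFml A P)} {ψ : MFml A P}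
    (hψ : ψ ∈ α) (hnψ : ψ.neg ∈ α) : ¬Consistent (hat α) :=
  not_not.2 <| MProof.of_taut fun v => (MFml.propEval_neg v _).2 fun hv =>
    (propEval_hat v α).1 hv _ hnψ ((propEval_hat v α).1 hv _ hψ)

theorem isAtomOf_signedSet [DecidableEq (MFml A P)] {φ₀ : MFml A P} {C s : Finset (MFml A P)}
    (hC : ∀ ψ, ψ ∈ C ↔ Cl φ₀ ψ) (hcons : Consistent (hat (signedSet C s))) :
    IsAtomOf φ₀ (signedSet C s) := by
  refine ⟨hcons, fun ψ hψ => ?_, ?_⟩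
  · have hmem : (if ψ ∈ s then ψ else ψ.neg) ∈ signedSet C s :=
      Finset.mem_image_of_mem _ ((hC ψ).2 hψ)
    by_cases hψs : ψ ∈ s
    · rw [if_pos hψs] at hmem
      exact .inl ⟨hmem, fun hneg => not_consistent_hat_of_mem_of_neg_mem hmem hneg hcons⟩
    · rw [if_neg hψs] at hmem
      exact .inr ⟨hmem, fun hpos => not_consistent_hat_of_mem_of_neg_mem hpos hmem hcons⟩
  · simp only [signedSet, Finset.mem_image, forall_exists_index, and_imp]
    rintro _ ψ hψ rfl
    exact ⟨ψ, (hC ψ).1 hψ, by split_ifs <;> simp⟩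

theorem MProof.disjList_hat_signedSet [DecidableEq (MFml A P)] (C : Finset (MFml A P)) :
    MProof (disjList ((C.powerset.toList.map (signedSet C)).map hat)) := by
  classical
  refine MProof.of_taut fun v => (propEval_disjList v _).2 ?_
  have hs : C.filter (·.propEval v) ∈ C.powerset.toList := by simp
  refine ⟨_, List.mem_map_of_mem (List.mem_map_of_mem hs), ?_⟩
  simp only [propEval_hat, signedSet, Finset.mem_image]
  rintro _ ⟨ψ, hψ, rfl⟩
  by_cases hψv : ψ.propEval v <;> simp [hψ, hψv]

/-- Every propositional valuation agrees with a sign pattern on the (finite) closure;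
a consistent sign pattern is an atom, an inconsistent one refutes itself. -/
theorem MProof.disjList_hat_atoms {φ₀ : MFml A P} {α : Finset (MFml A P)}
    (hα : IsAtomOf φ₀ α) {AtL : Finset (Finset (MFml A P))}
    (hAtL : ∀ α, IsAtomOf φ₀ α ↔ α ∈ AtL) :
    MProof (disjList (AtL.toList.map hat)) := by
  classical
  set C := hα.finite_setOf_cl.toFinset
  have hC : ∀ ψ, ψ ∈ C ↔ Cl φ₀ ψ := fun ψ => hα.finite_setOf_cl.mem_toFinset
  refine MProof.of_disjList (MProof.disjList_hat_signedSet C) ?_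
  simp only [List.mem_map, Finset.mem_toList, Finset.mem_powerset]
  rintro _ ⟨_, ⟨s, -, rfl⟩, rfl⟩
  by_cases hcons : Consistent (hat (signedSet C s))
  · have hatom : signedSet C s ∈ AtL := (hAtL _).1 (isAtomOf_signedSet hC hcons)
    exact MProof.imp_disjList_of_mem (List.mem_map_of_mem (Finset.mem_toList.2 hatom))
  · exact (not_not.1 hcons).mono fun v hnγ hγ => absurd hγ ((MFml.propEval_neg v _).1 hnγ)

end Atoms

open scoped Classical in
theorem add_root {A P : Type} (φ₀ : MFml A P) (e : MTrm A P)
    (AtL : Finset (Finset (MFml A P)))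
    (hAtL : ∀ α, IsAtomOf φ₀ α ↔ α ∈ AtL)
    (X : Set (Finset (MFml A P)))
    (hX : ∀ α ∈ X, IsAtomOf φ₀ α) (hXne : X.Nonempty) :
    ∃ α ∈ X, Consistent (MFml.and (hat α)
      (MFml.box (.plus e)
        (disjList (((AtL.filter (fun β => β ∉ X)).toList).map hat)))) := by
  by_contra! hcon
  obtain ⟨α₀, hα₀⟩ := hXne
  set D := disjList (((AtL.filter (fun β => β ∉ X)).toList).map hat)
  have hloeb : MProof (.imp (.box (.plus e) D) D) := by
    refine MProof.of_disjList (MProof.disjList_hat_atoms (hX α₀ hα₀) hAtL) ?_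
    simp only [List.mem_map, Finset.mem_toList]
    rintro _ ⟨β, hβ, rfl⟩
    by_cases hβX : β ∈ X
    · refine (not_not.1 (hcon β hβX)).mono fun v h => ?_
      simp only [MFml.propEval_neg, MFml.propEval_and, MFml.propEval_imp] at h ⊢
      tauto
    · have hβD : MProof (.imp (hat β) D) :=
        MProof.imp_disjList_of_mem (List.mem_map_of_mem (by simpa using ⟨hβ, hβX⟩))
      exact hβD.mono fun v h hβv _ => h hβv
  have hboxD : MProof (.box (.plus e) D) := (MProof.nec _ hloeb).mp (MProof.loeb e D)
  exact (hX α₀ hα₀).1 (MProof.neg_of_not_consistent_and (hcon α₀ hα₀) hboxD)
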